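/- Let d ≥ 2 be an integer. The function x ↦ K_{d/2−1}(x) is differentiable on (0, ∞), and for every η ∈ (0, 1) there exists a constant C_{d,η} > 0 such that for all x > 0, |K_{d/2−1}′(x)| ≤ C_{d,η} · e^{−(1−η)x} / x^{(d+1)/2}. -/

import Mathlib

open MeasureTheory

/-- The modified Bessel function of the second kind. -/
noncomputable def besselK (ν x : ℝ) : ℝ :=
  ∫ t in Set.Ioi (0:ℝ), Real.exp (-x * Real.cosh t) * Real.cosh (ν * t)

/-!
Differentiating under the integral sign, `-K_ν'(x) = ∫₀^∞ e^{-x cosh t} cosh t cosh (ν t) dt`.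
Splitting `e^{-x cosh t} = e^{-(1-η) x cosh t} e^{-η x cosh t}`, the first factor is at most
`e^{-(1-η) x}`. For `ν = d/2 - 1 ≥ 0` and `s = ν + 3/2 = (d+1)/2` we have
`cosh t cosh (ν t) ≤ 2^ν cosh^s t · cosh^{-1/2} t`; the maximum of `c ↦ e^{-y c} c^s` is
`(s/e)^s y^{-s}`, which at `y = η x` gives the power `x^{-s}`, and `cosh^{-1/2} t ≤ √2 e^{-t/2}`
is integrable.
-/

open Real Set

lemma rpow_mul_exp_neg_le {s z : ℝ} (hs : 0 < s) (hz : 0 ≤ z) :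
    z ^ s * exp (-z) ≤ s ^ s * exp (-s) := by
  calc z ^ s * exp (-z) = s ^ s * (z / s * exp (-(z / s))) ^ s := by
        rw [mul_rpow (div_nonneg hz hs.le) (exp_pos _).le, ← exp_mul, div_rpow hz hs.le]
        field_simp
    _ ≤ s ^ s * exp (-1) ^ s := by gcongr; exact mul_exp_neg_le_exp_neg_one _
    _ = s ^ s * exp (-s) := by rw [← exp_mul, neg_one_mul]

lemma exp_neg_mul_mul_rpow_le {s y c : ℝ} (hs : 0 < s) (hy : 0 < y) (hc : 0 ≤ c) :
    exp (-y * c) * c ^ s ≤ s ^ s * exp (-s) * y ^ (-s) := by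
  calc exp (-y * c) * c ^ s = (y * c) ^ s * exp (-(y * c)) * y ^ (-s) := by
        rw [mul_rpow hy.le hc, rpow_neg hy.le, neg_mul]
        field_simp
    _ ≤ s ^ s * exp (-s) * y ^ (-s) :=
        mul_le_mul_of_nonneg_right (rpow_mul_exp_neg_le hs (by positivity)) (by positivity)

lemma cosh_mul_le_two_rpow_mul_cosh_rpow {ν : ℝ} (hν : 0 ≤ ν) (t : ℝ) :
    cosh (ν * t) ≤ 2 ^ ν * cosh t ^ ν := by
  calc cosh (ν * t) ≤ exp |ν * t| := by
        rw [cosh_eq]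
        linarith [exp_le_exp.2 (le_abs_self (ν * t)), exp_le_exp.2 (neg_le_abs (ν * t))]
    _ = exp |t| ^ ν := by rw [abs_mul, abs_of_nonneg hν, ← exp_mul, mul_comm]
    _ ≤ (2 * cosh t) ^ ν := by gcongr; rw [cosh_eq]; linarith [exp_abs_le t]
    _ = 2 ^ ν * cosh t ^ ν := mul_rpow zero_le_two (cosh_pos t).le

lemma cosh_rpow_neg_half_le (t : ℝ) : cosh t ^ (-(1 / 2) : ℝ) ≤ √2 * exp (-(1 / 2) * t) := by
  have h : exp t / 2 ≤ cosh t := by rw [cosh_eq]; linarith [exp_pos (-t)]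
  calc cosh t ^ (-(1 / 2) : ℝ) ≤ (exp t / 2) ^ (-(1 / 2) : ℝ) :=
        rpow_le_rpow_of_nonpos (by positivity) h (by norm_num)
    _ = √2 * exp (-(1 / 2) * t) := by
        rw [div_rpow (exp_pos t).le zero_le_two, ← exp_mul, rpow_neg zero_le_two,
          ← sqrt_eq_rpow, div_inv_eq_mul, mul_comm, mul_comm t]

/-- `-∂ₓ` of the integrand of `besselK ν x`. -/
noncomputable def besselKDerivIntegrand (ν x t : ℝ) : ℝ :=
  exp (-x * cosh t) * cosh t * cosh (ν * t)

lemma besselKDerivIntegrand_nonneg (ν x t : ℝ) : 0 ≤ besselKDerivIntegrand ν x t := by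
  unfold besselKDerivIntegrand; positivity

lemma continuous_besselKDerivIntegrand (ν x : ℝ) : Continuous (besselKDerivIntegrand ν x) := by
  unfold besselKDerivIntegrand; fun_prop

lemma besselKDerivIntegrand_le {ν y : ℝ} (hν : 0 ≤ ν) (hy : 0 < y) (t : ℝ) :
    besselKDerivIntegrand ν y t ≤
      2 ^ ν * √2 * (ν + 3 / 2) ^ (ν + 3 / 2) * exp (-(ν + 3 / 2)) * y ^ (-(ν + 3 / 2))
        * exp (-(1 / 2) * t) := by
  have hc : 0 < cosh t := cosh_pos t
  have hsplit : cosh t ^ ν * cosh t = cosh t ^ (ν + 3 / 2) * cosh t ^ (-(1 / 2) : ℝ) := by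
    rw [← rpow_add hc, ← rpow_add_one hc.ne']; ring_nf
  calc besselKDerivIntegrand ν y t ≤ exp (-y * cosh t) * cosh t * (2 ^ ν * cosh t ^ ν) := by
        unfold besselKDerivIntegrand; gcongr; exact cosh_mul_le_two_rpow_mul_cosh_rpow hν t
    _ = 2 ^ ν * ((exp (-y * cosh t) * cosh t ^ (ν + 3 / 2)) * cosh t ^ (-(1 / 2) : ℝ)) := by
        linear_combination 2 ^ ν * exp (-y * cosh t) * hsplit
    _ ≤ 2 ^ ν * (((ν + 3 / 2) ^ (ν + 3 / 2) * exp (-(ν + 3 / 2)) * y ^ (-(ν + 3 / 2)))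
          * (√2 * exp (-(1 / 2) * t))) := by
        gcongr 2 ^ ν * ?_
        exact mul_le_mul (exp_neg_mul_mul_rpow_le (by linarith) hy hc.le)
          (cosh_rpow_neg_half_le t) (by positivity) (by positivity)
    _ = _ := by ring

lemma besselKDerivIntegrand_le_exp_mul {ν x y : ℝ} (hyx : y ≤ x) (t : ℝ) :
    besselKDerivIntegrand ν x t ≤ exp (-(x - y)) * besselKDerivIntegrand ν y t := by
  have hexp : exp (-x * cosh t) ≤ exp (-(x - y)) * exp (-y * cosh t) := by
    rw [← exp_add, exp_le_exp]
    nlinarith [one_le_cosh t]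
  unfold besselKDerivIntegrand
  calc exp (-x * cosh t) * cosh t * cosh (ν * t)
      ≤ exp (-(x - y)) * exp (-y * cosh t) * cosh t * cosh (ν * t) := by gcongr
    _ = _ := by ring

lemma integrableOn_besselKDerivIntegrand {ν y : ℝ} (hν : 0 ≤ ν) (hy : 0 < y) :
    IntegrableOn (besselKDerivIntegrand ν y) (Ioi 0) := by
  refine ((integrableOn_exp_mul_Ioi (by norm_num : -(1 / 2 : ℝ) < 0) 0).const_mul
    (2 ^ ν * √2 * (ν + 3 / 2) ^ (ν + 3 / 2) * exp (-(ν + 3 / 2)) * y ^ (-(ν + 3 / 2)))).mono'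
    (continuous_besselKDerivIntegrand ν y).aestronglyMeasurable ?_
  refine Filter.Eventually.of_forall fun t => ?_
  rw [norm_of_nonneg (besselKDerivIntegrand_nonneg ν y t)]
  exact besselKDerivIntegrand_le hν hy t

lemma integral_besselKDerivIntegrand_le {ν : ℝ} (hν : 0 ≤ ν) :
    ∃ A > 0, ∀ y > 0, ∫ t in Ioi 0, besselKDerivIntegrand ν y t ≤ A * y ^ (-(ν + 3 / 2)) := by
  set B := 2 ^ ν * √2 * (ν + 3 / 2) ^ (ν + 3 / 2) * exp (-(ν + 3 / 2))
  refine ⟨2 * B, by positivity, fun y hy => ?_⟩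
  have hexp := integrableOn_exp_mul_Ioi (by norm_num : -(1 / 2 : ℝ) < 0) 0
  calc ∫ t in Ioi 0, besselKDerivIntegrand ν y t
      ≤ ∫ t in Ioi 0, B * y ^ (-(ν + 3 / 2)) * exp (-(1 / 2) * t) :=
        setIntegral_mono (integrableOn_besselKDerivIntegrand hν hy) (hexp.const_mul _)
          (besselKDerivIntegrand_le hν hy)
    _ = 2 * B * y ^ (-(ν + 3 / 2)) := by
        rw [integral_const_mul, integral_exp_mul_Ioi (by norm_num) 0]; norm_num; ring

lemma integral_besselKDerivIntegrand_le_exp_mul {ν x y : ℝ} (hν : 0 ≤ ν) (hy : 0 < y)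
    (hyx : y ≤ x) :
    ∫ t in Ioi 0, besselKDerivIntegrand ν x t ≤
      exp (-(x - y)) * ∫ t in Ioi 0, besselKDerivIntegrand ν y t := by
  rw [← integral_const_mul]
  exact setIntegral_mono (integrableOn_besselKDerivIntegrand hν (hy.trans_le hyx))
    ((integrableOn_besselKDerivIntegrand hν hy).const_mul _)
    (besselKDerivIntegrand_le_exp_mul hyx)

lemma hasDerivAt_besselK {ν x : ℝ} (hν : 0 ≤ ν) (hx : 0 < x) :
    HasDerivAt (besselK ν) (-∫ t in Ioi 0, besselKDerivIntegrand ν x t) x := by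
  have hF_int : IntegrableOn (fun t => exp (-x * cosh t) * cosh (ν * t)) (Ioi 0) := by
    refine (integrableOn_besselKDerivIntegrand hν hx).mono'
      (Continuous.aestronglyMeasurable (by fun_prop)) (Filter.Eventually.of_forall fun t => ?_)
    rw [norm_of_nonneg (by positivity), besselKDerivIntegrand]
    gcongr
    exact le_mul_of_one_le_right (exp_pos _).le (one_le_cosh t)
  rw [← integral_neg]
  refine (hasDerivAt_integral_of_dominated_loc_of_deriv_le
    (F := fun x t => exp (-x * cosh t) * cosh (ν * t))
    (F' := fun x t => -besselKDerivIntegrand ν x t) (Ioi_mem_nhds (half_lt_self hx))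
    (Filter.Eventually.of_forall fun _ => Continuous.aestronglyMeasurable (by fun_prop)) hF_int
    (continuous_besselKDerivIntegrand ν x).neg.aestronglyMeasurable
    (Filter.Eventually.of_forall fun t x' hx' => ?_)
    (integrableOn_besselKDerivIntegrand hν (half_pos hx))
    (Filter.Eventually.of_forall fun t x' _ => ?_)).2
  · rw [norm_neg, norm_of_nonneg (besselKDerivIntegrand_nonneg ν x' t)]
    exact (besselKDerivIntegrand_le_exp_mul (le_of_lt hx') t).trans
      (mul_le_of_le_one_left (besselKDerivIntegrand_nonneg ν _ t)
        (exp_le_one_iff.2 (by linarith [mem_Ioi.1 hx'])))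
  · have hneg : -besselKDerivIntegrand ν x' t =
        exp (-x' * cosh t) * (-1 * cosh t) * cosh (ν * t) := by
      unfold besselKDerivIntegrand; ring
    exact hneg ▸ (((hasDerivAt_neg x').mul_const (cosh t)).exp).mul_const (cosh (ν * t))

theorem besselK_deriv_bound (d : ℕ) (hd : 2 ≤ d) :
    DifferentiableOn ℝ (besselK ((d : ℝ) / 2 - 1)) (Set.Ioi 0) ∧
    ∀ η ∈ Set.Ioo (0:ℝ) 1, ∃ C > 0, ∀ x > 0,
      |deriv (besselK ((d : ℝ) / 2 - 1)) x|
        ≤ C * Real.exp (-(1 - η) * x) / x ^ (((d : ℝ) + 1) / 2) := by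
  have hν : 0 ≤ (d : ℝ) / 2 - 1 := by
    rw [sub_nonneg, le_div_iff₀ two_pos, one_mul]; exact_mod_cast hd
  have hs : (d : ℝ) / 2 - 1 + 3 / 2 = ((d : ℝ) + 1) / 2 := by ring
  refine ⟨fun x hx => (hasDerivAt_besselK hν hx).differentiableAt.differentiableWithinAt, ?_⟩
  rintro η ⟨hη₀, hη₁⟩
  obtain ⟨A, hA, hbound⟩ := integral_besselKDerivIntegrand_le hν
  refine ⟨A * η ^ (-(((d : ℝ) + 1) / 2)), by positivity, fun x hx => ?_⟩
  rw [(hasDerivAt_besselK hν hx).deriv, abs_neg,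
    abs_of_nonneg (setIntegral_nonneg measurableSet_Ioi fun t _ =>
      besselKDerivIntegrand_nonneg _ x t)]
  calc ∫ t in Ioi 0, besselKDerivIntegrand ((d : ℝ) / 2 - 1) x t
      ≤ exp (-(x - η * x)) * ∫ t in Ioi 0, besselKDerivIntegrand ((d : ℝ) / 2 - 1) (η * x) t :=
        integral_besselKDerivIntegrand_le_exp_mul hν (by positivity)
          (mul_le_of_le_one_left hx.le hη₁.le)
    _ ≤ exp (-(x - η * x)) * (A * (η * x) ^ (-(((d : ℝ) + 1) / 2))) := by
        gcongr; rw [← hs]; exact hbound _ (by positivity)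
    _ = A * η ^ (-(((d : ℝ) + 1) / 2)) * exp (-(1 - η) * x) / x ^ (((d : ℝ) + 1) / 2) := by
        rw [mul_rpow hη₀.le hx.le, rpow_neg hx.le, div_eq_mul_inv]; ring_nf
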